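/- arXiv:1409.7970 — 3 statements merged into one kernel-verified Lean document; each statement's English description precedes it below -/
import Mathlib

section
/- Let X, Y' be Banach spaces, A₀ ∈ L(X,Y') boundedly invertible and A_j ∈ L(X,Y') with β_j := ‖A₀⁻¹A_j‖_{L(X,X)} satisfying ∑_{j≥1} β_j ≤ κ < 2. For y ∈ [-1/2,1/2]^ℕ let A(y) = A₀ + ∑_{j≥1} y_j A_j and A^{(s)}(y) = A₀ + ∑_{j=1}^{s} y_j A_j. Then for every f ∈ Y' and every y ∈ [-1/2,1/2]^ℕ, the solutions u(y) = A(y)⁻¹ f and u_s(y) = A^{(s)}(y)⁻¹ f satisfy ‖u(y) - u_s(y)‖_X ≤ C ‖f‖_{Y'} ∑_{j≥s+1} β_j, where C depends only on κ and ‖A₀⁻¹‖. -/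
/-!
Applying `A₀⁻¹` turns both equations into perturbations of the identity on `X`: with
`B j = A₀⁻¹ A j`, `P = ∑ y j B j` and its truncation `Pₛ = ∑_{j<s} y j B j`, we have
`u + P u = A₀⁻¹ f` and `uₛ + Pₛ uₛ = A₀⁻¹ f`, where `‖P‖, ‖Pₛ‖ ≤ κ/2 < 1` and
`‖P - Pₛ‖ ≤ (1/2) ∑_{j ≥ s} β j`. The difference `w = u - uₛ` solves `w + Pₛ w = -(P - Pₛ) u`,
so `(1 - κ/2) ‖w‖ ≤ ‖P - Pₛ‖ ‖u‖`, while `(1 - κ/2) ‖u‖ ≤ ‖A₀⁻¹‖ ‖f‖`. Hence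
`C = ‖A₀⁻¹‖ / (2 (1 - κ/2)²)` works; the numerator is enlarged by `1` so that `C > 0` also when
`X = 0`.
-/

open Finset ContinuousLinearMap

section Perturbation

variable {𝕜 E : Type*} [NontriviallyNormedField 𝕜] [SeminormedAddCommGroup E] [NormedSpace 𝕜 E]

theorem one_sub_opNorm_mul_norm_le {T : E →L[𝕜] E} {x g : E} (h : x + T x = g) :
    (1 - ‖T‖) * ‖x‖ ≤ ‖g‖ := by
  have : ‖x‖ ≤ ‖g‖ + ‖T‖ * ‖x‖ := calc
    ‖x‖ = ‖g - T x‖ := by rw [← h, add_sub_cancel_right]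
    _ ≤ ‖g‖ + ‖T x‖ := norm_sub_le _ _
    _ ≤ ‖g‖ + ‖T‖ * ‖x‖ := by gcongr; exact T.le_opNorm x
  linarith

theorem one_sub_opNorm_mul_norm_sub_le {P Q : E →L[𝕜] E} {u v g : E}
    (hu : u + P u = g) (hv : v + Q v = g) :
    (1 - ‖Q‖) * ‖u - v‖ ≤ ‖P - Q‖ * ‖u‖ := by
  have hdiff : (u - v) + Q (u - v) = -((P - Q) u) := by
    rw [map_sub, sub_apply]
    linear_combination (norm := module) hu - hv
  calc (1 - ‖Q‖) * ‖u - v‖ ≤ ‖-((P - Q) u)‖ := one_sub_opNorm_mul_norm_le hdiff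
    _ ≤ ‖P - Q‖ * ‖u‖ := by rw [norm_neg]; exact le_opNorm _ _

theorem norm_sub_le_of_add_apply_eq {P Q : E →L[𝕜] E} {u v g : E} {q : ℝ}
    (hP : ‖P‖ ≤ q) (hQ : ‖Q‖ ≤ q) (hq : q < 1) (hu : u + P u = g) (hv : v + Q v = g) :
    ‖u - v‖ ≤ ‖P - Q‖ * ‖g‖ / (1 - q) ^ 2 := by
  have hu_le : (1 - q) * ‖u‖ ≤ ‖g‖ :=
    (mul_le_mul_of_nonneg_right (by linarith) (norm_nonneg u)).trans
      (one_sub_opNorm_mul_norm_le hu)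
  have hw_le : (1 - q) * ‖u - v‖ ≤ ‖P - Q‖ * ‖u‖ :=
    (mul_le_mul_of_nonneg_right (by linarith) (norm_nonneg _)).trans
      (one_sub_opNorm_mul_norm_sub_le hu hv)
  rw [le_div_iff₀ (by nlinarith)]
  nlinarith [norm_nonneg (P - Q), norm_nonneg (u - v), mul_le_mul_of_nonneg_left hu_le
    (norm_nonneg (P - Q))]

end Perturbation

section WeightedSums

variable {ι 𝕜 E : Type*} [NormedField 𝕜] [SeminormedAddCommGroup E] [NormedSpace 𝕜 E]
  {c : ι → 𝕜} {B : ι → E} {r : ℝ}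

theorem norm_sum_smul_le (t : Finset ι) (hc : ∀ i, ‖c i‖ ≤ r) :
    ‖∑ i ∈ t, c i • B i‖ ≤ r * ∑ i ∈ t, ‖B i‖ := by
  rw [mul_sum]
  exact norm_sum_le_of_le t fun i _ =>
    (norm_smul_le _ _).trans (mul_le_mul_of_nonneg_right (hc i) (norm_nonneg _))

theorem norm_tsum_smul_le (hB : Summable fun i => ‖B i‖) (hc : ∀ i, ‖c i‖ ≤ r) :
    ‖∑' i, c i • B i‖ ≤ r * ∑' i, ‖B i‖ :=
  tsum_of_norm_bounded (hB.hasSum.mul_left r) fun i =>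
    (norm_smul_le _ _).trans (mul_le_mul_of_nonneg_right (hc i) (norm_nonneg _))

theorem summable_smul_of_summable_norm [CompleteSpace E] (hB : Summable fun i => ‖B i‖)
    (hc : ∀ i, ‖c i‖ ≤ r) : Summable fun i => c i • B i :=
  (hB.mul_left r).of_norm_bounded fun i =>
    (norm_smul_le _ _).trans (mul_le_mul_of_nonneg_right (hc i) (norm_nonneg _))

theorem norm_tsum_smul_sub_sum_range_le {E : Type*} [NormedAddCommGroup E] [NormedSpace 𝕜 E]
    [CompleteSpace E] {c : ℕ → 𝕜} {B : ℕ → E}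
    (hB : Summable fun i => ‖B i‖) (hc : ∀ i, ‖c i‖ ≤ r) (s : ℕ) :
    ‖∑' i, c i • B i - ∑ i ∈ range s, c i • B i‖ ≤ r * ∑' i, ‖B (s + i)‖ := by
  rw [← (summable_smul_of_summable_norm hB hc).sum_add_tsum_nat_add s, add_sub_cancel_left]
  simp_rw [add_comm _ s]
  exact norm_tsum_smul_le ((summable_nat_add_iff s).mpr hB |>.congr fun i => by rw [add_comm])
    fun i => hc _

end WeightedSums

section Reduction

variable {𝕜 X Y : Type*} [NontriviallyNormedField 𝕜] [NormedAddCommGroup X] [NormedSpace 𝕜 X]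
  [NormedAddCommGroup Y] [NormedSpace 𝕜 Y] (A₀ : X ≃L[𝕜] Y)

theorem ContinuousLinearEquiv.add_apply_eq_iff (S : X →L[𝕜] Y) {u : X} {f : Y} :
    ((A₀ : X →L[𝕜] Y) + S) u = f ↔ u + ((A₀.symm : Y →L[𝕜] X) ∘L S) u = A₀.symm f := by
  rw [← A₀.symm.injective.eq_iff]
  simp

theorem ContinuousLinearEquiv.symm_comp_tsum_smul {ι : Type*} (c : ι → 𝕜) (A : ι → X →L[𝕜] Y) :
    (A₀.symm : Y →L[𝕜] X) ∘L ∑' j, c j • A j = ∑' j, c j • (A₀.symm : Y →L[𝕜] X) ∘L A j := by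
  let e := (ContinuousLinearEquiv.refl 𝕜 X).arrowCongr A₀.symm
  have he : ∀ L, e L = (A₀.symm : Y →L[𝕜] X) ∘L L := fun L => by ext; simp [e]
  simpa only [he, comp_smul] using e.map_tsum (L := .unconditional ι) (f := fun j => c j • A j)

end Reduction

theorem stmt5_general
    {X Y' : Type*} [NormedAddCommGroup X] [NormedSpace ℝ X] [CompleteSpace X]
    [NormedAddCommGroup Y'] [NormedSpace ℝ Y']
    (A₀ : X ≃L[ℝ] Y') (A : ℕ → X →L[ℝ] Y') (κ : ℝ) (hκ : κ < 2)
    (hsum : Summable fun j => ‖(A₀.symm : Y' →L[ℝ] X) ∘L A j‖)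
    (hκsum : ∑' j, ‖(A₀.symm : Y' →L[ℝ] X) ∘L A j‖ ≤ κ) :
    ∃ C : ℝ, 0 < C ∧
      ∀ (f : Y') (y : ℕ → ℝ), (∀ j, |y j| ≤ 1 / 2) → ∀ s : ℕ, ∀ u us : X,
        ((A₀ : X →L[ℝ] Y') + ∑' j, y j • A j) u = f →
        ((A₀ : X →L[ℝ] Y') + ∑ j ∈ Finset.range s, y j • A j) us = f →
        ‖u - us‖ ≤ C * ‖f‖ * ∑' j : ℕ, ‖(A₀.symm : Y' →L[ℝ] X) ∘L A (s + j)‖ := by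
  set B := fun j => (A₀.symm : Y' →L[ℝ] X) ∘L A j
  have hq : 0 < 1 - κ / 2 := by linarith
  refine ⟨(‖(A₀.symm : Y' →L[ℝ] X)‖ + 1) / (2 * (1 - κ / 2) ^ 2), by positivity, ?_⟩
  intro f y hy s u us hu hus
  have hy' : ∀ j, ‖y j‖ ≤ 1 / 2 := by simpa only [Real.norm_eq_abs] using hy
  set P := ∑' j, y j • B j
  set Ps := ∑ j ∈ range s, y j • B j
  have hu' : u + P u = A₀.symm f := by
    rwa [A₀.add_apply_eq_iff, A₀.symm_comp_tsum_smul] at hu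
  have hus' : us + Ps us = A₀.symm f := by
    simpa only [A₀.add_apply_eq_iff, comp_finsetSum, comp_smul] using hus
  have hPs : ‖Ps‖ ≤ κ / 2 := by
    have := (norm_sum_smul_le (range s) hy').trans
      (mul_le_mul_of_nonneg_left (hsum.sum_le_tsum _ fun j _ => norm_nonneg (B j)) (by norm_num))
    linarith
  have hP : ‖P‖ ≤ κ / 2 := by
    have := norm_tsum_smul_le hsum hy'
    linarith
  calc ‖u - us‖ ≤ ‖P - Ps‖ * ‖A₀.symm f‖ / (1 - κ / 2) ^ 2 :=
        norm_sub_le_of_add_apply_eq hP hPs (by linarith) hu' hus'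
    _ ≤ 1 / 2 * (∑' j, ‖B (s + j)‖) * (‖(A₀.symm : Y' →L[ℝ] X)‖ * ‖f‖) / (1 - κ / 2) ^ 2 := by
        gcongr
        · exact norm_tsum_smul_sub_sum_range_le hsum hy' s
        · exact (A₀.symm : Y' →L[ℝ] X).le_opNorm f
    _ = ‖(A₀.symm : Y' →L[ℝ] X)‖ / (2 * (1 - κ / 2) ^ 2) * ‖f‖ * ∑' j, ‖B (s + j)‖ := by
        field_simp
    _ ≤ _ := by gcongr; linarith

/-- dimension truncation error for the parametric solution:
‖u(y) - u_s(y)‖ ≤ C ‖f‖ ∑_{j ≥ s+1} β_j with C depending only on κ and ‖A₀⁻¹‖.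
Indexing: `A j` stands for A_{j+1}, `y j` for y_{j+1}; the truncated operator
A^{(s)}(y) is `A₀ + ∑_{j ∈ range s} y j • A j` and the tail is `∑' j, β (s+j)`. -/
theorem stmt5
    {X Y' : Type*} [NormedAddCommGroup X] [NormedSpace ℝ X] [CompleteSpace X]
    [NormedAddCommGroup Y'] [NormedSpace ℝ Y'] [CompleteSpace Y']
    (A₀ : X ≃L[ℝ] Y') (A : ℕ → X →L[ℝ] Y') (κ : ℝ) (hκ : κ < 2)
    (hsum : Summable fun j => ‖(A₀.symm : Y' →L[ℝ] X) ∘L A j‖)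
    (hκsum : ∑' j, ‖(A₀.symm : Y' →L[ℝ] X) ∘L A j‖ ≤ κ) :
    ∃ C : ℝ, 0 < C ∧
      ∀ (f : Y') (y : ℕ → ℝ), (∀ j, |y j| ≤ 1 / 2) → ∀ s : ℕ, ∀ u us : X,
        ((A₀ : X →L[ℝ] Y') + ∑' j, y j • A j) u = f →
        ((A₀ : X →L[ℝ] Y') + ∑ j ∈ Finset.range s, y j • A j) us = f →
        ‖u - us‖ ≤ C * ‖f‖ * ∑' j : ℕ, ‖(A₀.symm : Y' →L[ℝ] X) ∘L A (s + j)‖ :=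
  stmt5_general A₀ A κ hκ hsum hκsum
end

section
/- Let X be a Banach space, B₁,…,B_s : X → X bounded with ∑_{j=1}^s ‖B_j‖ ≤ κ/2 < 1, and f ∈ X. For y ∈ [-1,1]^s define u(y) = (I + ∑_{j=1}^s y_j B_j)⁻¹ f. Then for every multi-index ν ∈ ℕ₀^s, ‖∂_y^ν u(y)‖_X ≤ |ν|! · (∏_{j=1}^s b_j^{ν_j}) · ‖f‖ / (1 - κ/2), where b_j = ‖B_j‖/(1-κ/2) and |ν| = ∑ ν_j. -/
/-!
With `C y = (1 + L y)⁻¹` for a continuous linear `L`, the derivative of inversion gives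
`D_h C = -C (L h) C`. Hence differentiating a word `(-C T₁) ⋯ (-C Tₘ) C f` in direction `h`
inserts the factor `-C (L h)` at each of its `m + 1` positions, and by induction the `n`-th
derivative of `y ↦ C y f` in directions `h₁, …, hₙ` is the sum, over all `n!` orderings, of the
words built from `L h₁, …, L hₙ`. Where `‖L y‖ ≤ c < 1` the Neumann bound `‖C‖ ≤ 1 / (1 - c)`
bounds each word by `∏ ‖L hᵢ‖ / (1 - c) · ‖f‖ / (1 - c)`.
-/

theorem List.sum_map_flatMap {ι κ M : Type*} [AddCommMonoid M] (l : List ι) (p : ι → List κ)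
    (g : κ → M) : ((l.flatMap p).map g).sum = (l.map fun i => ((p i).map g).sum).sum := by
  induction l <;> simp_all

theorem norm_list_sum_map_le {ι F : Type*} [SeminormedAddCommGroup F] (l : List ι) (g : ι → F)
    {M : ℝ} (hg : ∀ i ∈ l, ‖g i‖ ≤ M) : ‖(l.map g).sum‖ ≤ l.length * M := by
  induction l with
  | nil => simp
  | cons a l ih =>
    have htail := ih fun i hi => hg i (List.mem_cons_of_mem a hi)
    have hadd := norm_add_le (g a) (l.map g).sum
    simp only [List.map_cons, List.sum_cons, List.length_cons]
    push_cast
    linarith [hg a List.mem_cons_self]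

theorem isUnit_one_add_of_norm_lt_one {R : Type*} [NormedRing R] [HasSummableGeomSeries R] {x : R}
    (hx : ‖x‖ < 1) : IsUnit (1 + x) := by
  simpa using isUnit_one_sub_of_norm_lt_one (x := -x) (by rwa [norm_neg])

section ListSum

open List

variable {𝕜 E F ι : Type*} [NontriviallyNormedField 𝕜] [NormedAddCommGroup E] [NormedSpace 𝕜 E]
  [NormedAddCommGroup F] [NormedSpace 𝕜 F] {x : E}

theorem hasFDerivAt_list_sum (l : List ι) {g : ι → E → F} {g' : ι → E →L[𝕜] F}
    (hg : ∀ i ∈ l, HasFDerivAt (g i) (g' i) x) :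
    HasFDerivAt (fun z => (l.map (g · z)).sum) (l.map g').sum x := by
  induction l with
  | nil => simpa using hasFDerivAt_const (0 : F) x
  | cons a l ih =>
    simpa using (hg a mem_cons_self).fun_add (ih fun i hi => hg i (mem_cons_of_mem a hi))

theorem fderiv_list_sum_apply (l : List ι) {g : ι → E → F}
    (hg : ∀ i ∈ l, DifferentiableAt 𝕜 (g i) x) (h : E) :
    fderiv 𝕜 (fun z => (l.map (g · z)).sum) x h = (l.map (fun i => fderiv 𝕜 (g i) x h)).sum := by
  rw [(hasFDerivAt_list_sum l fun i hi => (hg i hi).hasFDerivAt).fderiv]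
  simpa [map_map, Function.comp_def] using
    map_list_sum (ContinuousLinearMap.apply 𝕜 F h) (l.map fun i => fderiv 𝕜 (g i) x)

end ListSum

namespace ParametricInverse

open List

variable {𝕜 E X : Type*} [NontriviallyNormedField 𝕜] [NormedAddCommGroup E] [NormedSpace 𝕜 E]
  [NormedAddCommGroup X] [NormedSpace 𝕜 X] (L : E →L[𝕜] X →L[𝕜] X) (f : X)

noncomputable def inv (y : E) : X →L[𝕜] X := Ring.inverse (1 + L y)

/-- `word L f [T₁, …, Tₘ] y = (-C T₁) ⋯ (-C Tₘ) C f` with `C = (1 + L y)⁻¹`. -/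
noncomputable def word : List (X →L[𝕜] X) → E → X
  | [], y => inv L y f
  | T :: l, y => -inv L y (T (word l y))

variable {L} {y : E}

theorem norm_le_div_one_sub {T : X →L[𝕜] X} {c : ℝ} (hT : ‖T‖ ≤ c) (hc : c < 1) (w : X) :
    ‖w‖ ≤ ‖w + T w‖ / (1 - c) := by
  have hTw : ‖T w‖ ≤ c * ‖w‖ := (T.le_opNorm w).trans (by gcongr)
  have htri : ‖w‖ ≤ ‖w + T w‖ + ‖T w‖ := by simpa using norm_sub_le (w + T w) (T w)
  rw [le_div_iff₀ (by linarith)]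
  linarith

theorem norm_inv_apply_le (hy : IsUnit (1 + L y)) {c : ℝ} (hc : ‖L y‖ ≤ c) (hc1 : c < 1) (z : X) :
    ‖inv L y z‖ ≤ ‖z‖ / (1 - c) := by
  have hz : inv L y z + L y (inv L y z) = z := by
    simpa [inv] using congr($(Ring.mul_inverse_cancel _ hy) z)
  simpa [hz] using norm_le_div_one_sub hc hc1 (inv L y z)

theorem norm_word_le (hy : IsUnit (1 + L y)) {c : ℝ} (hc : ‖L y‖ ≤ c) (hc1 : c < 1)
    (l : List (X →L[𝕜] X)) :
    ‖word L f l y‖ ≤ (l.map (‖·‖ / (1 - c))).prod * (‖f‖ / (1 - c)) := by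
  induction l with
  | nil => simpa [word] using norm_inv_apply_le hy hc hc1 f
  | cons T l ih =>
    calc ‖word L f (T :: l) y‖ ≤ ‖T (word L f l y)‖ / (1 - c) := by
          simpa [word] using norm_inv_apply_le hy hc hc1 _
      _ ≤ ‖T‖ * ((l.map (‖·‖ / (1 - c))).prod * (‖f‖ / (1 - c))) / (1 - c) := by
          gcongr
          exact (T.le_opNorm _).trans (by gcongr)
      _ = ((T :: l).map (‖·‖ / (1 - c))).prod * (‖f‖ / (1 - c)) := by
          simp only [map_cons, prod_cons]; ring

variable [CompleteSpace X]

theorem isOpen_setOf_isUnit : IsOpen {y : E | IsUnit (1 + L y)} :=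
  Units.isOpen.preimage (continuous_const.add L.continuous)

theorem hasFDerivAt_inv (hy : IsUnit (1 + L y)) :
    HasFDerivAt (inv L) (-(ContinuousLinearMap.mulLeftRight 𝕜 _ (inv L y) (inv L y)).comp L) y := by
  obtain ⟨U, hU⟩ := hy
  have hA : HasFDerivAt (fun z => 1 + L z) L y := L.hasFDerivAt.const_add 1
  have hinv := hasFDerivAt_ringInverse (𝕜 := 𝕜) U
  rw [← Ring.inverse_unit, hU] at hinv
  exact hinv.comp y hA

theorem contDiffAt_word (hy : IsUnit (1 + L y)) {n : WithTop ℕ∞} (l : List (X →L[𝕜] X)) :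
    ContDiffAt 𝕜 n (word L f l) y := by
  have hinv : ContDiffAt 𝕜 n (inv L) y := by
    obtain ⟨U, hU⟩ := hy
    have hring := contDiffAt_ringInverse 𝕜 (n := n) U
    rw [hU] at hring
    exact hring.comp y (contDiffAt_const.add L.contDiff.contDiffAt)
  induction l with
  | nil => exact hinv.clm_apply contDiffAt_const
  | cons T l ih => exact (hinv.clm_apply (T.contDiff.contDiffAt.comp y ih)).neg

/-- `permutations'Aux a l` is the list of insertions of `a` at every position of `l`. -/
theorem fderiv_word_apply (hy : IsUnit (1 + L y)) (l : List (X →L[𝕜] X)) (h : E) :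
    fderiv 𝕜 (word L f l) y h = ((permutations'Aux (L h) l).map (word L f · y)).sum := by
  induction l with
  | nil =>
    have hd := (hasFDerivAt_inv hy).clm_apply (hasFDerivAt_const f y)
    rw [show word L f [] = fun z => inv L z f from rfl, hd.fderiv]
    simp [word, permutations'Aux]
  | cons T l ih =>
    have hw : HasFDerivAt (word L f l) (fderiv 𝕜 (word L f l) y) y :=
      ((contDiffAt_word f hy (n := 1) l).differentiableAt one_ne_zero).hasFDerivAt
    have hd := ((hasFDerivAt_inv hy).clm_apply (T.hasFDerivAt.comp y hw)).neg
    rw [show word L f (T :: l) = -fun z => inv L z ((T ∘ word L f l) z) from rfl, hd.fderiv]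
    have hcons : (fun l' => word L f (T :: l') y) = (-(inv L y).comp T) ∘ (word L f · y) := rfl
    rw [permutations'Aux, map_cons, sum_cons, map_map, Function.comp_def (g := cons T), hcons,
      ← map_map, ← map_list_sum, ← ih]
    simp [word]

theorem iteratedFDeriv_word_nil_apply (n : ℕ) (hy : IsUnit (1 + L y)) (h : Fin n → E) :
    iteratedFDeriv 𝕜 n (word L f []) y h =
      (((ofFn fun i => L (h i)).permutations').map (word L f · y)).sum := by
  induction n generalizing y with
  | zero => simp [iteratedFDeriv_zero_apply, permutations']
  | succ n ih =>
    have hlocal : (fun z => iteratedFDeriv 𝕜 n (word L f []) z (Fin.tail h)) =ᶠ[nhds y]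
        fun z => (((ofFn fun i => L (Fin.tail h i)).permutations').map (word L f · z)).sum :=
      Filter.eventually_of_mem (isOpen_setOf_isUnit.mem_nhds hy) fun z hz => ih hz _
    have hdiff : DifferentiableAt 𝕜 (iteratedFDeriv 𝕜 n (word L f [])) y :=
      (contDiffAt_word f hy (n := (n + 1 : ℕ)) []).differentiableAt_iteratedFDeriv
        (by exact_mod_cast n.lt_succ_self)
    rw [iteratedFDeriv_succ_apply_left, ← fderiv_continuousMultilinear_apply_const_apply hdiff,
      hlocal.fderiv_eq, fderiv_list_sum_apply _ fun l _ =>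
        (contDiffAt_word f hy (n := 1) l).differentiableAt one_ne_zero]
    simp only [fderiv_word_apply f hy, ofFn_succ, permutations', sum_map_flatMap, Fin.tail]

theorem norm_iteratedFDeriv_inv_apply_le {c : ℝ} (hc : ‖L y‖ ≤ c) (hc1 : c < 1) (n : ℕ)
    (h : Fin n → E) :
    ‖iteratedFDeriv 𝕜 n (fun z => inv L z f) y h‖ ≤
      n.factorial * (∏ i, ‖L (h i)‖ / (1 - c)) * ‖f‖ / (1 - c) := by
  have hy := isUnit_one_add_of_norm_lt_one (hc.trans_lt hc1)
  have hterm : ∀ l ∈ (ofFn fun i => L (h i)).permutations',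
      ‖word L f l y‖ ≤ (∏ i, ‖L (h i)‖ / (1 - c)) * (‖f‖ / (1 - c)) := by
    intro l hl
    have hprod : (l.map (‖·‖ / (1 - c))).prod = ∏ i, ‖L (h i)‖ / (1 - c) := by
      rw [((mem_permutations'.mp hl).map _).prod_eq, map_ofFn, prod_ofFn]
      rfl
    simpa [hprod] using norm_word_le f hy hc hc1 l
  have hlength : (ofFn fun i => L (h i)).permutations'.length = n.factorial := by
    rw [← (permutations_perm_permutations' _).length_eq, length_permutations, length_ofFn]
  calc ‖iteratedFDeriv 𝕜 n (word L f []) y h‖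
      ≤ (ofFn fun i => L (h i)).permutations'.length *
          ((∏ i, ‖L (h i)‖ / (1 - c)) * (‖f‖ / (1 - c))) := by
        rw [iteratedFDeriv_word_nil_apply f n hy]
        exact norm_list_sum_map_le _ _ hterm
    _ = n.factorial * (∏ i, ‖L (h i)‖ / (1 - c)) * ‖f‖ / (1 - c) := by
        rw [hlength]; ring

end ParametricInverse

section Cube

variable {ι : Type*}

theorem uniqueDiffOn_setOf_forall_abs_le_one : UniqueDiffOn ℝ {y : ι → ℝ | ∀ j, |y j| ≤ 1} := by
  have hcube : {y : ι → ℝ | ∀ j, |y j| ≤ 1} = Set.univ.pi fun _ => Set.Icc (-1) 1 := by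
    ext; simp [abs_le, Pi.le_def, forall_and]
  exact hcube ▸ UniqueDiffOn.pi fun _ _ => uniqueDiffOn_Icc (by norm_num)

theorem norm_sum_smul_le_of_forall_abs_le_one [Fintype ι] {F : Type*} [SeminormedAddCommGroup F]
    [NormedSpace ℝ F] {y : ι → ℝ} (hy : ∀ j, |y j| ≤ 1) (B : ι → F) :
    ‖∑ j, y j • B j‖ ≤ ∑ j, ‖B j‖ :=
  norm_sum_le_of_le _ fun j _ => by
    simpa [norm_smul] using mul_le_of_le_one_left (norm_nonneg (B j)) (hy j)

end Cube

open ParametricInverse in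
/-- multi-parameter regularity bound: for
u(y) = (I + ∑_{j=1}^s y_j B_j)⁻¹ f on [-1,1]^s with ∑ ‖B_j‖ ≤ κ/2 < 1,
every mixed partial derivative ∂_y^ν u satisfies
‖∂_y^ν u(y)‖ ≤ |ν|! ∏_j b_j^{ν_j} ‖f‖/(1-κ/2) with b_j = ‖B_j‖/(1-κ/2).
The mixed partial of order ν, with |ν| = n and directions recorded by
k : Fin n → Fin s (ν_j = #{i | k i = j}), is encoded as the n-th iterated
Fréchet derivative within the cube applied to the coordinate directions. -/
theorem stmt11
    {X : Type*} [NormedAddCommGroup X] [NormedSpace ℝ X] [CompleteSpace X]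
    (s : ℕ) (B : Fin s → X →L[ℝ] X) (κ : ℝ) (hκ : κ < 2)
    (hsum : ∑ j, ‖B j‖ ≤ κ / 2) (f : X) (u : (Fin s → ℝ) → X)
    (hu : ∀ y : Fin s → ℝ, (∀ j, |y j| ≤ 1) →
      (1 + ∑ j, y j • B j) (u y) = f) :
    ∀ (n : ℕ) (k : Fin n → Fin s), ∀ y : Fin s → ℝ, (∀ j, |y j| ≤ 1) →
      ‖iteratedFDerivWithin ℝ n u {y : Fin s → ℝ | ∀ j, |y j| ≤ 1} y
          (fun i => Pi.single (k i) 1)‖ ≤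
        (n.factorial : ℝ) * (∏ i, ‖B (k i)‖ / (1 - κ / 2)) * ‖f‖ / (1 - κ / 2) := by
  intro n k y hy
  set S : Set (Fin s → ℝ) := {y | ∀ j, |y j| ≤ 1}
  let L := LinearMap.toContinuousLinearMap (Fintype.linearCombination ℝ B)
  have hL : ∀ z, L z = ∑ j, z j • B j := Fintype.linearCombination_apply ℝ B
  have hLS : ∀ z ∈ S, ‖L z‖ ≤ κ / 2 := fun z hz =>
    hL z ▸ (norm_sum_smul_le_of_forall_abs_le_one hz B).trans hsum
  have hc : κ / 2 < 1 := by linarith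
  have hunit : ∀ z ∈ S, IsUnit (1 + L z) := fun z hz =>
    isUnit_one_add_of_norm_lt_one ((hLS z hz).trans_lt hc)
  have hEq : Set.EqOn u (fun z => inv L z f) S := fun z hz => by
    rw [← hu z hz, ← hL]
    exact congr($(Ring.inverse_mul_cancel _ (hunit z hz)) (u z)).symm
  have hsmooth : ContDiffAt ℝ n (fun z => inv L z f) y := contDiffAt_word f (hunit y hy) []
  rw [iteratedFDerivWithin_congr hEq hy, iteratedFDerivWithin_eq_iteratedFDeriv (s := S)
    uniqueDiffOn_setOf_forall_abs_le_one hsmooth hy]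
  have hLB : ∀ j, L (Pi.single j 1) = B j := fun j => by simp [hL]
  simpa [hLB] using norm_iteratedFDeriv_inv_apply_le f (hLS y hy) hc n fun i => Pi.single (k i) 1
end

section
/- Let X, Y' be Banach spaces, A₀ ∈ L(X,Y') boundedly invertible with ‖A₀⁻¹‖_{L(Y',X)} ≤ 1/μ₀, A_j ∈ L(X,Y') with ∑_{j≥1} β_j ≤ κ < 2, β_j = ‖A₀⁻¹A_j‖, and A(y) = A₀ + ∑_{j≥1} y_j A_j. Then for all y, y' ∈ [-1/2,1/2]^ℕ and f ∈ Y', the solutions satisfy the Lipschitz-type bound ‖A(y)⁻¹f - A(y')⁻¹f‖_X ≤ C ‖f‖_{Y'} ∑_{j≥1} |y_j - y'_j| β_j, with C = 1/((1-κ/2)² μ₀). -/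
/-- Lipschitz dependence of the parametric solution on the
parameter: ‖A(y)⁻¹f - A(y')⁻¹f‖ ≤ (1/((1-κ/2)²μ₀)) ‖f‖ ∑_j |y_j - y'_j| β_j. -/
theorem stmt14
    {X Y' : Type*} [NormedAddCommGroup X] [NormedSpace ℝ X] [CompleteSpace X]
    [NormedAddCommGroup Y'] [NormedSpace ℝ Y'] [CompleteSpace Y']
    (A₀ : X ≃L[ℝ] Y') (A : ℕ → X →L[ℝ] Y') (κ : ℝ) (hκ : κ < 2)
    (μ₀ : ℝ) (hμ₀ : 0 < μ₀) (hA₀inv : ‖(A₀.symm : Y' →L[ℝ] X)‖ ≤ 1 / μ₀)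
    (hsum : Summable fun j => ‖(A₀.symm : Y' →L[ℝ] X) ∘L A j‖)
    (hκsum : ∑' j, ‖(A₀.symm : Y' →L[ℝ] X) ∘L A j‖ ≤ κ) :
    ∀ (f : Y') (y y' : ℕ → ℝ), (∀ j, |y j| ≤ 1 / 2) → (∀ j, |y' j| ≤ 1 / 2) →
      ∀ u u' : X,
        ((A₀ : X →L[ℝ] Y') + ∑' j, y j • A j) u = f →
        ((A₀ : X →L[ℝ] Y') + ∑' j, y' j • A j) u' = f →
        ‖u - u'‖ ≤ 1 / ((1 - κ / 2) ^ 2 * μ₀) * ‖f‖ *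
          ∑' j, |y j - y' j| * ‖(A₀.symm : Y' →L[ℝ] X) ∘L A j‖ := by
  intro f y y' hy hy' u u' hu hu'
  set T : ℕ → X →L[ℝ] X := fun j => (A₀.symm : Y' →L[ℝ] X) ∘L A j with hT
  set β : ℕ → ℝ := fun j => ‖T j‖ with hβ
  have hβ0 : ∀ j, 0 ≤ β j := fun j => norm_nonneg _
  have hκ0 : 0 ≤ κ := le_trans (tsum_nonneg hβ0) hκsum
  have h2 : (0:ℝ) < 1 - κ/2 := by linarith
  have hsumβ : Summable β := hsum
  -- summability helpers
  have hzsum : ∀ z : ℕ → ℝ, (∀ j, |z j| ≤ 1) → Summable (fun j => |z j| * β j) := by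
    intro z hz
    refine Summable.of_nonneg_of_le (fun j => by positivity) (fun j => ?_) hsumβ
    calc |z j| * β j ≤ 1 * β j := by
          exact mul_le_mul_of_nonneg_right (hz j) (hβ0 j)
      _ = β j := one_mul _
  have hsumnv : ∀ (z : ℕ → ℝ), (∀ j, |z j| ≤ 1) → ∀ v : X,
      Summable (fun j => ‖z j • T j v‖) := by
    intro z hz v
    refine Summable.of_nonneg_of_le (fun j => norm_nonneg _) (fun j => ?_)
      (hsumβ.mul_right ‖v‖)
    calc ‖z j • T j v‖ = |z j| * ‖T j v‖ := by rw [norm_smul, Real.norm_eq_abs]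
      _ ≤ 1 * (β j * ‖v‖) := by
          refine mul_le_mul (hz j) ((T j).le_opNorm v) (norm_nonneg _) zero_le_one
      _ = β j * ‖v‖ := one_mul _
  have hsumv : ∀ (z : ℕ → ℝ), (∀ j, |z j| ≤ 1) → ∀ v : X,
      Summable (fun j => z j • T j v) := fun z hz v => (hsumnv z hz v).of_norm
  -- norm bound for the series
  have hbound : ∀ (z : ℕ → ℝ), (∀ j, |z j| ≤ 1) → ∀ v : X,
      ‖∑' j, z j • T j v‖ ≤ (∑' j, |z j| * β j) * ‖v‖ := by
    intro z hz v
    calc ‖∑' j, z j • T j v‖ ≤ ∑' j, ‖z j • T j v‖ :=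
          norm_tsum_le_tsum_norm (hsumnv z hz v)
      _ ≤ ∑' j, |z j| * β j * ‖v‖ := by
          refine Summable.tsum_le_tsum (fun j => ?_) (hsumnv z hz v) ((hzsum z hz).mul_right ‖v‖)
          rw [norm_smul, Real.norm_eq_abs, mul_assoc]
          exact mul_le_mul_of_nonneg_left ((T j).le_opNorm v) (abs_nonneg _)
      _ = (∑' j, |z j| * β j) * ‖v‖ := tsum_mul_right
  -- derived equation
  have key : ∀ (z : ℕ → ℝ), (∀ j, |z j| ≤ 1) → ∀ (v : X) (g : Y'),
      ((A₀ : X →L[ℝ] Y') + ∑' j, z j • A j) v = g →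
      v + ∑' j, z j • T j v = A₀.symm g := by
    intro z hz v g hv
    have hAle : ∀ j, ‖z j • A j‖ ≤ ‖(A₀ : X →L[ℝ] Y')‖ * β j := by
      intro j
      have hAj : ∀ x : X, A j x = (A₀ : X →L[ℝ] Y') (T j x) := by
        intro x
        simp [hT, ContinuousLinearMap.comp_apply]
      have h1 : ‖A j‖ ≤ ‖(A₀ : X →L[ℝ] Y')‖ * β j := by
        refine ContinuousLinearMap.opNorm_le_bound _ (by positivity) (fun x => ?_)
        rw [hAj x]
        calc ‖(A₀ : X →L[ℝ] Y') (T j x)‖ ≤ ‖(A₀ : X →L[ℝ] Y')‖ * ‖T j x‖ :=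
              ContinuousLinearMap.le_opNorm _ _
          _ ≤ ‖(A₀ : X →L[ℝ] Y')‖ * (β j * ‖x‖) := by
              exact mul_le_mul_of_nonneg_left ((T j).le_opNorm x) (norm_nonneg _)
          _ = ‖(A₀ : X →L[ℝ] Y')‖ * β j * ‖x‖ := by ring
      calc ‖z j • A j‖ = |z j| * ‖A j‖ := by
            have h := norm_smul (z j) (A j)
            simpa using h
        _ ≤ 1 * (‖(A₀ : X →L[ℝ] Y')‖ * β j) := by
            exact mul_le_mul (hz j) h1 (norm_nonneg _) zero_le_one
        _ = ‖(A₀ : X →L[ℝ] Y')‖ * β j := one_mul _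
    have hsumA : Summable (fun j => z j • A j) := by
      refine Summable.of_norm (Summable.of_nonneg_of_le (fun j => norm_nonneg _)
        hAle (hsumβ.mul_left _))
    have happ : (∑' j, z j • A j) v = ∑' j, z j • A j v := by
      have := (ContinuousLinearMap.apply ℝ Y' v).map_tsum hsumA
      simpa using this
    have hsumAv : Summable (fun j => z j • A j v) := by
      have := hsumA.map (ContinuousLinearMap.apply ℝ Y' v) (ContinuousLinearMap.apply ℝ Y' v).continuous
      simpa [Function.comp_def] using this
    have hsymm : A₀.symm ((∑' j, z j • A j) v) = ∑' j, z j • T j v := by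
      rw [happ]
      have := (A₀.symm : Y' →L[ℝ] X).map_tsum hsumAv
      simp only [ContinuousLinearEquiv.coe_coe] at this
      rw [this]
      refine tsum_congr (fun j => ?_)
      simp [hT, ContinuousLinearMap.comp_apply]
    have h1 : (A₀ : X →L[ℝ] Y') v + (∑' j, z j • A j) v = g := by
      rw [← ContinuousLinearMap.add_apply]; exact hv
    have h3 : A₀.symm ((A₀ : X →L[ℝ] Y') v + (∑' j, z j • A j) v) = A₀.symm g := by
      rw [h1]
    rwa [map_add, hsymm, ContinuousLinearEquiv.coe_coe, ContinuousLinearEquiv.symm_apply_apply] at h3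
  -- bounds on |y|, |y'| by 1
  have hy1 : ∀ j, |y j| ≤ 1 := fun j => (hy j).trans (by norm_num)
  have hy'1 : ∀ j, |y' j| ≤ 1 := fun j => (hy' j).trans (by norm_num)
  have hd1 : ∀ j, |y j - y' j| ≤ 1 := by
    intro j
    calc |y j - y' j| ≤ |y j| + |y' j| := abs_sub _ _
      _ ≤ 1/2 + 1/2 := add_le_add (hy j) (hy' j)
      _ = 1 := by norm_num
  -- κ/2 bounds
  have hhalf : ∀ z : ℕ → ℝ, (∀ j, |z j| ≤ 1/2) → ∑' j, |z j| * β j ≤ κ/2 := by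
    intro z hz
    have hz1 : ∀ j, |z j| ≤ 1 := fun j => (hz j).trans (by norm_num)
    calc ∑' j, |z j| * β j ≤ ∑' j, (1/2) * β j := by
          refine Summable.tsum_le_tsum (fun j => mul_le_mul_of_nonneg_right (hz j) (hβ0 j))
            (hzsum z hz1) (hsumβ.mul_left _)
      _ = (1/2) * ∑' j, β j := tsum_mul_left
      _ ≤ (1/2) * κ := mul_le_mul_of_nonneg_left hκsum (by norm_num)
      _ = κ/2 := by ring
  have hEy := key y hy1 u f hu
  have hEy' := key y' hy'1 u' f hu'
  -- the difference equation
  set D : ℝ := ∑' j, |y j - y' j| * β j with hD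
  have hD0 : 0 ≤ D := tsum_nonneg (fun j => by positivity)
  have hdiff : u - u' + ∑' j, y j • T j (u - u') = -(∑' j, (y j - y' j) • T j u') := by
    have h0 : u - u' + (∑' j, y j • T j u - ∑' j, y' j • T j u') = 0 := by
      have := congrArg₂ (· - ·) hEy hEy'
      simp only [sub_self] at this
      linear_combination (norm := abel) this
    have hsplit : (∑' j, y j • T j u) - ∑' j, y' j • T j u'
        = (∑' j, y j • T j (u - u')) + ∑' j, (y j - y' j) • T j u' := by
      rw [← Summable.tsum_sub (hsumv y hy1 u) (hsumv y' hy'1 u'),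
          ← Summable.tsum_add (hsumv y hy1 (u - u')) (hsumv _ hd1 u')]
      refine tsum_congr (fun j => ?_)
      rw [map_sub, smul_sub, sub_smul]
      abel
    rw [hsplit] at h0
    linear_combination (norm := abel) h0
  -- norm estimates
  have hest1 : (1 - κ/2) * ‖u - u'‖ ≤ D * ‖u'‖ := by
    have hle : ‖u - u'‖ ≤ ‖u - u' + ∑' j, y j • T j (u - u')‖ + ‖∑' j, y j • T j (u - u')‖ := by
      have h := norm_sub_le (u - u' + ∑' j, y j • T j (u - u')) (∑' j, y j • T j (u - u'))
      simp only [add_sub_cancel_right] at h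
      exact h
    have h4 : ‖u - u' + ∑' j, y j • T j (u - u')‖ = ‖∑' j, (y j - y' j) • T j u'‖ := by
      rw [hdiff, norm_neg]
    have h5 : ‖∑' j, (y j - y' j) • T j u'‖ ≤ D * ‖u'‖ := hbound _ hd1 u'
    have h6 : ‖∑' j, y j • T j (u - u')‖ ≤ (κ/2) * ‖u - u'‖ := by
      calc ‖∑' j, y j • T j (u - u')‖ ≤ (∑' j, |y j| * β j) * ‖u - u'‖ := hbound y hy1 _
        _ ≤ (κ/2) * ‖u - u'‖ := mul_le_mul_of_nonneg_right (hhalf y hy) (norm_nonneg _)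
    linarith [hle, h4, h5, h6]
  have hest2 : (1 - κ/2) * ‖u'‖ ≤ (1/μ₀) * ‖f‖ := by
    have h7 : ‖u'‖ ≤ ‖u' + ∑' j, y' j • T j u'‖ + ‖∑' j, y' j • T j u'‖ := by
      have h := norm_sub_le (u' + ∑' j, y' j • T j u') (∑' j, y' j • T j u')
      simp only [add_sub_cancel_right] at h
      exact h
    have h8 : ‖u' + ∑' j, y' j • T j u'‖ ≤ (1/μ₀) * ‖f‖ := by
      rw [hEy']
      calc ‖A₀.symm f‖ ≤ ‖(A₀.symm : Y' →L[ℝ] X)‖ * ‖f‖ := (A₀.symm : Y' →L[ℝ] X).le_opNorm f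
        _ ≤ (1/μ₀) * ‖f‖ := mul_le_mul_of_nonneg_right hA₀inv (norm_nonneg _)
    have h9 : ‖∑' j, y' j • T j u'‖ ≤ (κ/2) * ‖u'‖ := by
      calc ‖∑' j, y' j • T j u'‖ ≤ (∑' j, |y' j| * β j) * ‖u'‖ := hbound y' hy'1 _
        _ ≤ (κ/2) * ‖u'‖ := mul_le_mul_of_nonneg_right (hhalf y' hy') (norm_nonneg _)
    linarith [h7, h8, h9]
  -- combine
  clear_value T β D
  have hf0 : 0 ≤ ‖f‖ := norm_nonneg f
  have hu'0 : 0 ≤ ‖u'‖ := norm_nonneg u'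
  have hest2' : (1 - κ/2) * (μ₀ * ‖u'‖) ≤ ‖f‖ := by
    have h := mul_le_mul_of_nonneg_left hest2 (le_of_lt hμ₀)
    have hμ : μ₀ * (1/μ₀ * ‖f‖) = ‖f‖ := by field_simp
    linarith [h, hμ]
  have hc : (0:ℝ) < (1 - κ/2)^2 * μ₀ := by positivity
  have s1 : ((1 - κ/2) * μ₀) * ((1 - κ/2) * ‖u - u'‖) ≤ ((1 - κ/2) * μ₀) * (D * ‖u'‖) :=
    mul_le_mul_of_nonneg_left hest1 (by positivity)
  have s2 : D * ((1 - κ/2) * (μ₀ * ‖u'‖)) ≤ D * ‖f‖ := mul_le_mul_of_nonneg_left hest2' hD0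
  have hmain : ((1 - κ/2)^2 * μ₀) * ‖u - u'‖ ≤ ‖f‖ * D := by linarith [s1, s2]
  rw [show 1/((1 - κ/2)^2 * μ₀) * ‖f‖ * D = ‖f‖ * D / ((1 - κ/2)^2 * μ₀) by ring,
    le_div_iff₀ hc]
  linarith [hmain]
end
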